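/- Let f : F_q → F_q be differentially d-uniform. Then Σ_{r=1}^{d+1} r(d+2−r) M_r(f) ≥ q + d, where M_r(f) is the number of elements with exactly r preimages. -/
import Mathlib


open Finset
open scoped Classical

/-- Number of preimages of `y` under `f`. -/
noncomputable def preCard {F : Type*} [Fintype F] (f : F → F) (y : F) : ℕ :=
  (Finset.univ.filter fun x => f x = y).card

/-- `N(f)`: the number of pairs `(x,y)` with `f x = f y`. -/
noncomputable def NN {F : Type*} [Fintype F] (f : F → F) : ℕ :=
  (Finset.univ.filter fun p : F × F => f p.1 = f p.2).card

/-- `f` is differentially `d`-uniform: every equation `f (x+a) - f x = b` with `a ≠ 0`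
has at most `d` solutions. -/
def DUniform {F : Type*} [Field F] [Fintype F] (f : F → F) (d : ℕ) : Prop :=
  ∀ a b : F, a ≠ 0 → (Finset.univ.filter fun x => f (x + a) - f x = b).card ≤ d

/-- `M_r(f)`: the number of elements with exactly `r` preimages under `f`. -/
noncomputable def Mcount {F : Type*} [Fintype F] (f : F → F) (r : ℕ) : ℕ :=
  (Finset.univ.filter fun y => preCard f y = r).card

section Aux

variable {F : Type*} [Fintype F]

lemma preCard_le (f : F → F) (y : F) : preCard f y ≤ Fintype.card F := by
  classical
  unfold preCard
  simpa using Finset.card_filter_le Finset.univ (fun x => f x = y)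

lemma sum_preCard (f : F → F) : ∑ y, preCard f y = Fintype.card F := by
  classical
  rw [← Finset.card_univ (α := F)]
  exact (Finset.card_eq_sum_card_fiberwise (fun x (_ : x ∈ Finset.univ) =>
    Finset.mem_univ (f x))).symm

lemma sum_preCard_sq (f : F → F) : ∑ y, preCard f y * preCard f y = NN f := by
  classical
  unfold NN
  rw [Finset.card_eq_sum_card_fiberwise (f := fun p : F × F => f p.1)
      (fun p (_ : p ∈ Finset.univ.filter fun p : F × F => f p.1 = f p.2) =>
        Finset.mem_univ (f p.1))]
  refine Finset.sum_congr rfl fun y _ => ?_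
  have hset : ((Finset.univ.filter fun p : F × F => f p.1 = f p.2).filter
      fun p => f p.1 = y) = (Finset.univ.filter fun x => f x = y) ×ˢ
      (Finset.univ.filter fun x => f x = y) := by
    ext p
    simp only [Finset.mem_filter, Finset.mem_product, Finset.mem_univ, true_and]
    constructor
    · rintro ⟨h1, h2⟩; exact ⟨h2, h1.symm.trans h2⟩
    · rintro ⟨h1, h2⟩; exact ⟨h1.trans h2.symm, h1⟩
  rw [hset, Finset.card_product]
  rfl

lemma Mcount_eq_zero (f : F → F) {r : ℕ} (hr : Fintype.card F < r) : Mcount f r = 0 := by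
  classical
  unfold Mcount
  rw [Finset.card_eq_zero, Finset.filter_eq_empty_iff]
  intro y _ h
  exact absurd (h ▸ preCard_le f y) (by omega)

end Aux

lemma NN_le {F : Type*} [Field F] [Fintype F] {f : F → F} {d : ℕ} (hf : DUniform f d) :
    NN f ≤ Fintype.card F + d * (Fintype.card F - 1) := by
  classical
  have key : NN f = ∑ a : F, (Finset.univ.filter fun x => f (x + a) = f x).card := by
    unfold NN
    rw [Finset.card_eq_sum_card_fiberwise (f := fun p : F × F => p.2 - p.1)
        (fun p (_ : p ∈ Finset.univ.filter fun p : F × F => f p.1 = f p.2) =>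
          Finset.mem_univ (p.2 - p.1))]
    refine Finset.sum_congr rfl fun a _ => ?_
    refine Finset.card_bij' (fun p _ => p.1) (fun x _ => (x, x + a)) ?_ ?_ ?_ ?_
    · intro p hp
      simp only [Finset.mem_filter, Finset.mem_univ, true_and] at hp ⊢
      have h2 : p.2 = p.1 + a := by linear_combination hp.2
      rw [← h2]; exact hp.1.symm
    · intro x hx
      simp only [Finset.mem_filter, Finset.mem_univ, true_and] at hx ⊢
      exact ⟨hx.symm, by ring⟩
    · intro p hp
      simp only [Finset.mem_filter, Finset.mem_univ, true_and] at hp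
      have h2 : p.2 = p.1 + a := by linear_combination hp.2
      exact Prod.ext rfl h2.symm
    · intro x hx; rfl
  rw [key, ← Finset.add_sum_erase _ _ (Finset.mem_univ (0 : F))]
  have h0 : (Finset.univ.filter fun x => f (x + (0 : F)) = f x).card ≤ Fintype.card F := by
    simpa only [Finset.card_univ] using Finset.card_filter_le Finset.univ (fun x => f (x + (0 : F)) = f x)
  have hrest : ∑ a ∈ Finset.univ.erase (0 : F),
      (Finset.univ.filter fun x => f (x + a) = f x).card ≤ d * (Fintype.card F - 1) := by
    have hbd : ∀ a ∈ Finset.univ.erase (0 : F),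
        (Finset.univ.filter fun x => f (x + a) = f x).card ≤ d := by
      intro a ha
      have ha0 : a ≠ 0 := (Finset.mem_erase.mp ha).1
      have := hf a 0 ha0
      simpa [sub_eq_zero] using this
    calc ∑ a ∈ Finset.univ.erase (0 : F),
        (Finset.univ.filter fun x => f (x + a) = f x).card
        ≤ ∑ _a ∈ Finset.univ.erase (0 : F), d := Finset.sum_le_sum hbd
      _ = (Finset.univ.erase (0 : F)).card * d := by rw [Finset.sum_const, smul_eq_mul]
      _ = (Fintype.card F - 1) * d := by
          rw [Finset.card_erase_of_mem (Finset.mem_univ _), Finset.card_univ]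
      _ = d * (Fintype.card F - 1) := Nat.mul_comm _ _
  exact Nat.add_le_add h0 hrest

lemma pointwise_ineq (d r : ℕ) :
    (d + 1) * r ≤ (if r ∈ Finset.Icc 1 (d + 1) then r * (d + 2 - r) else 0) + r * (r - 1) := by
  by_cases h : r ∈ Finset.Icc 1 (d + 1)
  · rw [if_pos h]
    rw [Finset.mem_Icc] at h
    have h1 : (d + 2 - r) + (r - 1) = d + 1 := by omega
    have heq : (d + 1) * r = r * (d + 2 - r) + r * (r - 1) :=
      calc (d + 1) * r = r * ((d + 2 - r) + (r - 1)) := by rw [h1, Nat.mul_comm]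
        _ = r * (d + 2 - r) + r * (r - 1) := Nat.mul_add _ _ _
    exact heq.le
  · rw [if_neg h, Nat.zero_add]
    rw [Finset.mem_Icc] at h
    push_neg at h
    rcases Nat.eq_zero_or_pos r with h0 | h0
    · simp [h0]
    · have hr : d + 2 ≤ r := h h0
      have hle : d + 1 ≤ r - 1 := by omega
      calc (d + 1) * r ≤ (r - 1) * r := Nat.mul_le_mul_right r hle
        _ = r * (r - 1) := Nat.mul_comm _ _

/-- Regrouping: sum over `y` of the truncated weight equals the sum over `r`. -/
lemma sum_G {F : Type*} [Fintype F] (f : F → F) (d : ℕ) :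
    ∑ y, (if preCard f y ∈ Finset.Icc 1 (d + 1) then
        preCard f y * (d + 2 - preCard f y) else 0)
      = ∑ r ∈ Finset.Icc 1 (d + 1), r * (d + 2 - r) * Mcount f r := by
  classical
  set G : ℕ → ℕ := fun r => if r ∈ Finset.Icc 1 (d + 1) then r * (d + 2 - r) else 0 with hG
  have step1 : ∑ y, G (preCard f y)
      = ∑ r ∈ Finset.range (Fintype.card F + 1), G r * Mcount f r := by
    rw [← Finset.sum_fiberwise_of_maps_to (g := fun y => preCard f y)
        (t := Finset.range (Fintype.card F + 1))
        (fun y _ => Finset.mem_range.mpr (Nat.lt_succ_of_le (preCard_le f y)))]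
    refine Finset.sum_congr rfl fun r _ => ?_
    have hcongr : ∑ y ∈ Finset.univ.filter fun y => preCard f y = r, G (preCard f y)
        = ∑ _y ∈ Finset.univ.filter fun y => preCard f y = r, G r :=
      Finset.sum_congr rfl fun y hy => by rw [(Finset.mem_filter.mp hy).2]
    rw [hcongr, Finset.sum_const, smul_eq_mul, Nat.mul_comm]
    rfl
  rw [step1]
  have hleft : ∑ r ∈ Finset.range (Fintype.card F + 1), G r * Mcount f r
      = ∑ r ∈ Finset.range (Fintype.card F + 1) ∪ Finset.Icc 1 (d + 1),
          G r * Mcount f r := by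
    refine Finset.sum_subset Finset.subset_union_left fun r _ hr => ?_
    rw [Finset.mem_range] at hr
    rw [Mcount_eq_zero f (by omega), Nat.mul_zero]
  have hright : ∑ r ∈ Finset.Icc 1 (d + 1), r * (d + 2 - r) * Mcount f r
      = ∑ r ∈ Finset.range (Fintype.card F + 1) ∪ Finset.Icc 1 (d + 1),
          r * (d + 2 - r) * Mcount f r := by
    refine Finset.sum_subset Finset.subset_union_right fun r _ hr => ?_
    rw [Finset.mem_Icc] at hr
    push_neg at hr
    have hz : r * (d + 2 - r) = 0 := by
      rcases Nat.eq_zero_or_pos r with h0 | h0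
      · simp [h0]
      · have : d + 2 - r = 0 := by have := hr h0; omega
        simp [this]
    rw [hz, Nat.zero_mul]
  rw [hleft, hright]
  refine Finset.sum_congr rfl fun r _ => ?_
  rw [hG]
  by_cases hr : r ∈ Finset.Icc 1 (d + 1)
  · simp only [if_pos hr]
  · simp only [if_neg hr, Nat.zero_mul]
    rw [Finset.mem_Icc] at hr
    push_neg at hr
    have hz : r * (d + 2 - r) = 0 := by
      rcases Nat.eq_zero_or_pos r with h0 | h0
      · simp [h0]
      · have : d + 2 - r = 0 := by have := hr h0; omega
        simp [this]
    rw [hz, Nat.zero_mul]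

/-- for a differentially `d`-uniform `f`,
`Σ_{r=1}^{d+1} r(d+2−r) M_r(f) ≥ q + d`. -/
theorem sum_Mr_ge_q_add_d {F : Type*} [Field F] [Fintype F] {f : F → F} {d : ℕ}
    (hf : DUniform f d) :
    Fintype.card F + d ≤ ∑ r ∈ Finset.Icc 1 (d + 1), r * (d + 2 - r) * Mcount f r := by
  classical
  have hn1 : 1 ≤ Fintype.card F := Fintype.card_pos
  have h1 : (d + 1) * Fintype.card F
      ≤ (∑ r ∈ Finset.Icc 1 (d + 1), r * (d + 2 - r) * Mcount f r)
        + ∑ y, preCard f y * (preCard f y - 1) := by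
    calc (d + 1) * Fintype.card F = ∑ y, (d + 1) * preCard f y := by
          rw [← Finset.mul_sum, sum_preCard]
      _ ≤ ∑ y, ((if preCard f y ∈ Finset.Icc 1 (d + 1) then
            preCard f y * (d + 2 - preCard f y) else 0) +
            preCard f y * (preCard f y - 1)) :=
          Finset.sum_le_sum fun y _ => pointwise_ineq d (preCard f y)
      _ = _ := by rw [Finset.sum_add_distrib, sum_G]
  have h2 : (∑ y, preCard f y * (preCard f y - 1)) + Fintype.card F = NN f := by
    calc (∑ y, preCard f y * (preCard f y - 1)) + Fintype.card F
        = ∑ y, (preCard f y * (preCard f y - 1) + preCard f y) := by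
          rw [Finset.sum_add_distrib, sum_preCard]
      _ = ∑ y, preCard f y * preCard f y := by
          refine Finset.sum_congr rfl fun y _ => ?_
          generalize preCard f y = r
          cases r with
          | zero => simp
          | succ m => simp only [Nat.succ_sub_one]; ring
      _ = NN f := sum_preCard_sq f
  have h3 : NN f ≤ Fintype.card F + d * (Fintype.card F - 1) := NN_le hf
  have e1 : d * (Fintype.card F - 1) + d = d * Fintype.card F := by
    have hpred : Fintype.card F - 1 + 1 = Fintype.card F := by omega
    calc d * (Fintype.card F - 1) + d = d * ((Fintype.card F - 1) + 1) :=
          (Nat.mul_succ d (Fintype.card F - 1)).symm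
      _ = d * Fintype.card F := by rw [hpred]
  have e2 : (d + 1) * Fintype.card F = d * Fintype.card F + Fintype.card F := by ring
  linarith
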